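/- arXiv:1411.5272 — 7 statements merged into one kernel-verified Lean document; each statement's English description precedes it below -/
import Mathlib

section
/- Let R be a root system with normalized invariant form so that long roots have squared length 2, θ the highest root, β a positive root, d_β = 2/(β,β), ℓ, N positive integers, λ¹ a dominant weight in the co-weight lattice L (i.e. d_β divides λ¹(β^∨) for all positive roots β), and λ⁰ a dominant integral weight with λ⁰(θ^∨) ≤ ℓ. Write (ℓNλ¹+λ⁰)(β^∨) = (p_β − 1)·d_β·ℓ + m_β with 0 < m_β ≤ d_β·ℓ. Then p_β ≤ N·(λ¹(θ^∨) + 1). -/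
/-- Corollary 3.3 (arithmetic form).  Here `lam1β = λ¹(β^∨)`, `lam1θ = λ¹(θ^∨)`,
`lam0β = λ⁰(β^∨)`, `lam0θ = λ⁰(θ^∨)` and `dβ = 2/(β,β)`.  The membership
`λ¹ ∈ L⁺` is encoded by `dβ ∣ λ¹(β^∨)` together with
`λ¹(β^∨)(β,β) ≤ λ¹(θ^∨)(θ,θ)`, i.e. `λ¹(β^∨) ≤ dβ·λ¹(θ^∨)` (and likewise for the
dominant integral weight `λ⁰`, by Lemma 3.2).  If
`(ℓNλ¹+λ⁰)(β^∨) = (p−1)·dβ·ℓ + m` with `0 < m ≤ dβ·ℓ`, then `p ≤ N(λ¹(θ^∨)+1)`. -/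
theorem p_beta_le (ℓ N dβ : ℕ) (hℓ : 0 < ℓ) (hN : 0 < N) (hd : 0 < dβ)
    (lam1β lam1θ lam0β lam0θ : ℕ)
    (hdvd : dβ ∣ lam1β)
    (hlam1 : lam1β ≤ dβ * lam1θ)
    (hlam0 : lam0β ≤ dβ * lam0θ)
    (hlev : lam0θ ≤ ℓ)
    (p m : ℕ) (hm0 : 0 < m) (hmle : m ≤ dβ * ℓ)
    (hpm : ℓ * N * lam1β + lam0β + dβ * ℓ = p * (dβ * ℓ) + m) :
    p ≤ N * (lam1θ + 1) := by
  have h1 : p * (dβ * ℓ) < dβ * ℓ * (N * lam1θ + 2) := by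
    have h2 : p * (dβ * ℓ) + m ≤ ℓ * N * (dβ * lam1θ) + dβ * ℓ + dβ * ℓ := by
      rw [← hpm]; have := hlam0.trans (Nat.mul_le_mul_left dβ hlev)
      nlinarith [Nat.mul_le_mul_left (ℓ * N) hlam1]
    nlinarith
  have h3 : p < N * lam1θ + 2 :=
    lt_of_mul_lt_mul_right (by nlinarith) (Nat.zero_le (dβ * ℓ))
  nlinarith
end

section
/- Let λ ∈ P^+ be a dominant integral weight and N ≥ 1. On the set P^+(λ,N) of N-tuples (λ_1,…,λ_N) of dominant integral weights summing to λ, define r_{β,k}(λ̄) = min over all 1 ≤ i_1 < … < i_k ≤ N of (λ_{i_1}+…+λ_{i_k})(β^∨), and λ̄ ⪯ μ̄ iff r_{β,k}(λ̄) ≤ r_{β,k}(μ̄) for all positive roots β and all 1 ≤ k ≤ N. Suppose λ = Nλ¹ + λ⁰ where λ¹ ∈ L^+ and λ⁰ ∈ P^+ with λ⁰(θ^∨) ≤ 1. Then the tuple (λ¹, …, λ¹, λ¹+λ⁰) is a maximal element of (P^+(λ,N), ⪯): if (λ¹,…,λ¹,λ¹+λ⁰) ⪯ (μ_1,…,μ_N)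 then (μ_1,…,μ_N) is a permutation of (λ¹,…,λ¹,λ¹+λ⁰). -/
/-- Abstract model of the weight combinatorics of a finite-dimensional complex simple
Lie algebra: `ι` indexes the simple roots, `R` the positive roots, a dominant integral
weight is a function `ι → ℕ` (its values on the simple coroots), and `cf β i` are the
(nonnegative integral) coefficients of the coroot `β^∨` in the simple coroots, so that
`λ(β^∨) = ∑ i, cf β i * λ i`. -/
def corootEval {ι R : Type*} [Fintype ι] (cf : R → ι → ℕ) (β : R) (lam : ι → ℕ) : ℕ :=
  ∑ i, cf β i * lam i

/-- `r_{β,k}(λ̄)`: the minimum over `k`-element subsets `{i_1 < ⋯ < i_k}` of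
`(λ_{i_1} + ⋯ + λ_{i_k})(β^∨)`. -/
noncomputable def rβk {ι R : Type*} [Fintype ι] (cf : R → ι → ℕ) {N : ℕ}
    (β : R) (k : ℕ) (lam : Fin N → ι → ℕ) : ℕ :=
  sInf {m | ∃ s : Finset (Fin N), s.card = k ∧
    corootEval cf β (fun i => ∑ a ∈ s, lam a i) = m}

/-- The partial order on `P⁺(λ,N)`: `λ̄ ⪯ μ̄` iff `r_{β,k}(λ̄) ≤ r_{β,k}(μ̄)` for all
positive roots `β` and `1 ≤ k ≤ N`. -/
def tupleLE {ι R : Type*} [Fintype ι] (cf : R → ι → ℕ) {N : ℕ}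
    (lam mu : Fin N → ι → ℕ) : Prop :=
  ∀ (β : R) (k : ℕ), 1 ≤ k → k ≤ N → rβk cf β k lam ≤ rβk cf β k mu

/-- Maximality of `(λ¹,…,λ¹,λ¹+λ⁰)` in `(P⁺(Nλ¹+λ⁰,N), ⪯)`: here `e : ι → R` realizes
the simple roots among the positive roots (`cf (e i) = δ_i`), `θ` is the highest root
(all coefficients of `θ^∨` in the simple coroots are positive), `λ¹ ∈ L⁺` (i.e.
`λ¹ = ∑ n_i·d_i·ω_i`) and `λ⁰ ∈ P⁺` with `λ⁰(θ^∨) ≤ 1`.  If a tuple `μ̄` of dominant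
integral weights sums to `Nλ¹+λ⁰` and `(λ¹,…,λ¹,λ¹+λ⁰) ⪯ μ̄`, then `μ̄` is a
permutation of `(λ¹,…,λ¹,λ¹+λ⁰)`. -/
theorem maximal_tuple_general {ι R : Type*} [Fintype ι] [DecidableEq ι]
    (cf : R → ι → ℕ) (e : ι → R) (he : ∀ i, cf (e i) = Pi.single i 1)
    (θ : R) (hθ : ∀ i, 1 ≤ cf θ i)
    (N : ℕ) (hN : 1 ≤ N)
    (lam1 lam0 : ι → ℕ)
    (d : ι → ℕ) (hd : ∀ i, 0 < d i) (hL : ∃ n : ι → ℕ, ∀ i, lam1 i = d i * n i)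
    (hlam0 : corootEval cf θ lam0 ≤ 1)
    (lam : Fin N → ι → ℕ)
    (hlam : ∀ i : Fin N, lam i = if (i : ℕ) = N - 1 then lam1 + lam0 else lam1)
    (mu : Fin N → ι → ℕ)
    (hsum : ∀ i, ∑ a, mu a i = N * lam1 i + lam0 i)
    (hle : tupleLE cf lam mu) :
    ∃ σ : Equiv.Perm (Fin N), ∀ a, mu (σ a) = lam a := by

  classical
  have heval : ∀ (i : ι) (f : ι → ℕ), corootEval cf (e i) f = f i := by
    intro i f
    simp [corootEval, he, Pi.single_apply]
  have hlastlt : N - 1 < N := by omega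
  set last : Fin N := ⟨N - 1, hlastlt⟩ with hlastdef
  have hlam' : ∀ a : Fin N, lam a = if a = last then lam1 + lam0 else lam1 := by
    intro a
    rw [hlam a]
    congr 1
    simp [Fin.ext_iff, hlastdef]
  -- every mu a dominates lam1
  have hlow : ∀ (a : Fin N) (i : ι), lam1 i ≤ mu a i := by
    intro a i
    have h := hle (e i) 1 le_rfl hN
    have h2 : rβk cf (e i) 1 mu ≤ mu a i := by
      apply Nat.sInf_le
      exact ⟨{a}, by simp, by simp [heval]⟩
    have h1 : lam1 i ≤ rβk cf (e i) 1 lam := by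
      apply le_csInf
      · exact ⟨lam ⟨0, by omega⟩ i, {⟨0, by omega⟩}, by simp, by simp [heval]⟩
      · rintro m ⟨s, hs, rfl⟩
        rw [heval]
        obtain ⟨b, hb⟩ := Finset.card_eq_one.mp hs
        subst hb
        simp only [Finset.sum_singleton]
        rw [hlam' b]
        split
        · simp
        · exact le_rfl
    exact le_trans h1 (le_trans h h2)
  have hexc : ∀ i, ∑ a, (mu a i - lam1 i) = lam0 i := by
    intro i
    have hsplit : ∑ a, mu a i = (∑ _a : Fin N, lam1 i) + ∑ a, (mu a i - lam1 i) := by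
      rw [← Finset.sum_add_distrib]
      apply Finset.sum_congr rfl
      intro a _
      have := hlow a i
      omega
    rw [hsum i] at hsplit
    simp only [Finset.sum_const, Finset.card_univ, Fintype.card_fin, smul_eq_mul] at hsplit
    omega
  by_cases h0 : ∀ i, lam0 i = 0
  · refine ⟨1, fun a => ?_⟩
    have hmu : ∀ (b : Fin N) (i : ι), mu b i = lam1 i := by
      intro b i
      have hz : ∑ a, (mu a i - lam1 i) = 0 := by rw [hexc i, h0 i]
      have := Finset.sum_eq_zero_iff.mp hz b (Finset.mem_univ b)
      have := hlow b i
      omega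
    rw [hlam' a]
    funext i
    rw [hmu]
    split
    · simp [h0 i]
    · rfl
  · push_neg at h0
    obtain ⟨i₀, hi₀⟩ := h0
    have hterm : ∀ j, cf θ j * lam0 j ≤ 1 := fun j =>
      le_trans (Finset.single_le_sum (f := fun i => cf θ i * lam0 i)
        (fun i _ => Nat.zero_le _) (Finset.mem_univ j)) hlam0
    have hlam0i₀ : lam0 i₀ = 1 := by
      have h1 := hterm i₀
      have h2 := hθ i₀
      nlinarith [Nat.one_le_iff_ne_zero.mpr hi₀]
    have hlam0j : ∀ j, j ≠ i₀ → lam0 j = 0 := by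
      intro j hj
      by_contra hjne
      have hsub : ({i₀, j} : Finset ι) ⊆ Finset.univ := Finset.subset_univ _
      have hsum2 : ∑ i ∈ ({i₀, j} : Finset ι), cf θ i * lam0 i ≤ 1 :=
        le_trans (Finset.sum_le_sum_of_subset hsub) hlam0
      rw [Finset.sum_pair (Ne.symm hj)] at hsum2
      have h2 := hθ i₀
      have h3 := hθ j
      have h4 : 1 ≤ lam0 j := Nat.one_le_iff_ne_zero.mpr hjne
      nlinarith
    -- find the unique index b with excess 1 at i₀
    have hones : ∑ a, (mu a i₀ - lam1 i₀) = 1 := by rw [hexc i₀, hlam0i₀]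
    have hex : ∃ b : Fin N, mu b i₀ - lam1 i₀ ≠ 0 := by
      by_contra hc
      push_neg at hc
      rw [Finset.sum_eq_zero (fun a _ => hc a)] at hones
      omega
    obtain ⟨b, hb⟩ := hex
    have hsplit : (∑ a ∈ Finset.univ.erase b, (mu a i₀ - lam1 i₀)) + (mu b i₀ - lam1 i₀) = 1 := by
      rw [← hones]
      exact Finset.sum_erase_add _ _ (Finset.mem_univ b)
    have hrest : ∑ a ∈ Finset.univ.erase b, (mu a i₀ - lam1 i₀) = 0 := by omega
    have hbval : mu b i₀ - lam1 i₀ = 1 := by omega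
    have haval : ∀ a, a ≠ b → mu a i₀ = lam1 i₀ := by
      intro a ha
      have h1 := Finset.sum_eq_zero_iff.mp hrest a (Finset.mem_erase.mpr ⟨ha, Finset.mem_univ a⟩)
      have := hlow a i₀
      omega
    have hjval : ∀ (a : Fin N) (j : ι), j ≠ i₀ → mu a j = lam1 j := by
      intro a j hj
      have hz : ∑ c, (mu c j - lam1 j) = 0 := by rw [hexc j, hlam0j j hj]
      have := Finset.sum_eq_zero_iff.mp hz a (Finset.mem_univ a)
      have := hlow a j
      omega
    refine ⟨Equiv.swap last b, fun a => ?_⟩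
    rw [hlam' a]
    by_cases ha : a = last
    · subst ha
      rw [Equiv.swap_apply_left, if_pos rfl]
      funext i
      simp only [Pi.add_apply]
      by_cases hi : i = i₀
      · rw [hi, hlam0i₀]
        have := hlow b i₀
        omega
      · rw [hlam0j i hi, hjval b i hi]
        omega
    · have hne : Equiv.swap last b a ≠ b := by
        intro hc
        apply ha
        have h2 : Equiv.swap last b a = Equiv.swap last b last := by
          rw [hc, Equiv.swap_apply_left]
        exact (Equiv.swap last b).injective h2
      rw [if_neg ha]
      funext i
      by_cases hi : i = i₀
      · rw [hi]; exact haval _ hne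
      · exact hjval _ i hi
end

section
/- Let ℓ ≥ 1, N ≥ 1, and let r, s, k, j be nonnegative integers with 0 ≤ j < N and m = kN + j. Let q = max{0, (N−ℓ)k} and p = max{0, j−ℓ}, and suppose r + s ≥ 1 + rℓ + q + p and r + s ≤ m. Then every tuple (b_0, b_1, …, b_s) of nonnegative integers satisfying b_0 + b_1 + … + b_s = r and b_1 + 2b_2 + … + s·b_s = s has some index p' ≥ N with b_{p'} ≠ 0; equivalently, there is no such tuple with b_{p'} = 0 for all p' ≥ N. -/
/-- The combinatorial core of Theorem 4.3(1) for `sl₂`: with `m = kN + j`, `0 ≤ j < N`,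
`q = max(0,(N−ℓ)k)`, `p = max(0,j−ℓ)`, if `r + s ≥ 1 + rℓ + q + p` and `r + s ≤ m`,
then every tuple `(b_0,…,b_s)` of nonnegative integers with `∑ b_i = r` and
`∑ i·b_i = s` has a nonzero entry `b_{p'}` with `p' ≥ N`. -/
theorem garland_tuple_has_high_index (ℓ N r s k j : ℕ)
    (hℓ : 1 ≤ ℓ) (hN : 1 ≤ N) (hj : j < N)
    (hq : (r + s : ℤ) ≥ 1 + r * ℓ + max 0 (((N : ℤ) - ℓ) * k) + max 0 ((j : ℤ) - ℓ))
    (hrs : r + s ≤ k * N + j)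
    (b : ℕ → ℕ)
    (hsupp : ∀ i, s < i → b i = 0)
    (hsum : ∑ i ∈ Finset.range (s + 1), b i = r)
    (hwt : ∑ i ∈ Finset.range (s + 1), i * b i = s) :
    ∃ p', N ≤ p' ∧ b p' ≠ 0 := by
  by_contra h
  push_neg at h
  have h1 : s ≤ (N - 1) * r := by
    calc s = ∑ i ∈ Finset.range (s + 1), i * b i := hwt.symm
      _ ≤ ∑ i ∈ Finset.range (s + 1), (N - 1) * b i := by
          apply Finset.sum_le_sum
          intro i _
          by_cases hi : N ≤ i
          · simp [h i hi]
          · exact Nat.mul_le_mul_right _ (by omega)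
      _ = (N - 1) * r := by rw [← Finset.mul_sum, hsum]
  have h1' : (s : ℤ) ≤ ((N : ℤ) - 1) * r := by
    have := h1
    zify [hN] at this
    linarith
  have hrs' : (r : ℤ) + s ≤ (k : ℤ) * N + j := by exact_mod_cast hrs
  have hr0 : (0 : ℤ) ≤ r := Int.natCast_nonneg r
  have hℓ' : (1 : ℤ) ≤ ℓ := by exact_mod_cast hℓ
  have hj' : (j : ℤ) < N := by exact_mod_cast hj
  rcases le_or_gt (N : ℤ) (ℓ : ℤ) with hc | hc
  · have hq0 : max 0 (((N : ℤ) - ℓ) * k) = 0 :=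
      max_eq_left (mul_nonpos_of_nonpos_of_nonneg (by linarith) (Int.natCast_nonneg k))
    have hp0 : max 0 ((j : ℤ) - ℓ) = 0 := max_eq_left (by linarith)
    rw [hq0, hp0] at hq
    nlinarith [mul_nonneg hr0 (sub_nonneg.mpr hc)]
  · have hq0 : max 0 (((N : ℤ) - ℓ) * k) = ((N : ℤ) - ℓ) * k :=
      max_eq_right (mul_nonneg (by linarith) (Int.natCast_nonneg k))
    have hpp : max 0 ((j : ℤ) - ℓ) ≥ (j : ℤ) - ℓ := le_max_right _ _
    rw [hq0] at hq
    -- derive r ≤ k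
    have hrk : (r : ℤ) ≤ k := by
      have hlt : (r : ℤ) * ℓ < ((k : ℤ) + 1) * ℓ := by nlinarith
      have := lt_of_mul_lt_mul_right hlt (by linarith : (0 : ℤ) ≤ ℓ)
      linarith
    have hpp0 : (0 : ℤ) ≤ max 0 ((j : ℤ) - ℓ) := le_max_left _ _
    nlinarith [mul_nonneg (sub_nonneg.mpr (le_of_lt hc)) (sub_nonneg.mpr hrk)]
end

section
/- With S(k^{N−j},(k+1)^j) defined as the set of N-tuples (i_0,…,i_{N−1}) of nonnegative integers satisfying ∑_{p=0}^{N−1}(N!/(N−p))·i_p ≤ N!·k − ∑_{ℓ=0}^{N−4}(N!/(N−ℓ)!)(N−ℓ−2)!·b_ℓ + j(N−1)! (with b_ℓ as in the paper's congruence recursion), the cardinality of S(k^{N−j},(k+1)^j) equals (k+1)^{N−j}·(k+2)^{j}. -/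
/-- The auxiliary residues `b_ℓ` from the congruence recursion defining
`S(k^{N−j},(k+1)^j)`: `0 ≤ b_ℓ < N − ℓ`, `i_0 − j ≡ b_0 (mod N)` and
`i_ℓ + (b_{ℓ−1} mod (N−ℓ)) ≡ b_ℓ (mod (N−ℓ))`. -/
def bres (N j : ℕ) (i : ℕ → ℕ) : ℕ → ℕ
  | 0 => (((i 0 : ℤ) - (j : ℤ)) % (N : ℤ)).toNat
  | ℓ + 1 => (i (ℓ + 1) + bres N j i ℓ % (N - (ℓ + 1))) % (N - (ℓ + 1))

/-- The set `S(k^{N−j},(k+1)^j)` of `N`-tuples `(i_0,…,i_{N−1})` of nonnegative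
integers satisfying
`∑_{p=0}^{N−1} (N!/(N−p))·i_p ≤ N!·k − ∑_{ℓ=0}^{N−4} (N!/(N−ℓ)!)·(N−ℓ−2)!·b_ℓ + j·(N−1)!`. -/
def Sset (N j k : ℕ) : Set (Fin N → ℕ) :=
  {x | ∀ i : ℕ → ℕ, (∀ p : Fin N, i p = x p) → (∀ p, N ≤ p → i p = 0) →
    ((∑ p ∈ Finset.range N, (N.factorial / (N - p)) * i p : ℕ) : ℤ) ≤
      (N.factorial * k : ℤ)
        - ∑ ℓ ∈ Finset.range (N - 3),
            ((N.factorial / (N - ℓ).factorial) * (N - ℓ - 2).factorial * bres N j i ℓ : ℕ)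
        + (j * (N - 1).factorial : ℤ)}

/-!
Write `N = n + 1` and `U = N k + j`, so that the right-hand side of the inequality is
`(N - 1)! · U`. Once `i₀ ≤ U` is fixed, put `u = U - i₀` and `V = ⌊n u / (n + 1)⌋`: the
condition on `(i₁, …, i_n)` is exactly the one defining `S` for `n` tuples and
`V = n k' + j'` with `j' < n`. Indeed `j' ≡ -b₀ (mod n)`, so the congruences for
`b₁, b₂, …` become those for `b'₀, b'₁, …`, and the `ℓ = 0` residue term `(n - 1)! · b₀` absorbs
the fractional part of `n u / (n + 1)`. So the cardinalities `D_N(U)` satisfy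
`D_{n+1}(U) = ∑_{u ≤ U} D_n(⌊n u / (n + 1)⌋)`, and the product formula obeys the same recursion
since `D_{n+1}(U + 1) - D_{n+1}(U) = D_n(⌊n (U + 1) / (n + 1)⌋)`.
-/

open Finset
open scoped Nat

namespace Sset

section ZeroExtend

variable {N : ℕ}

def zeroExtend (x : Fin N → ℕ) (p : ℕ) : ℕ := if h : p < N then x ⟨p, h⟩ else 0

@[simp]
lemma zeroExtend_val (x : Fin N → ℕ) (p : Fin N) : zeroExtend x p = x p := dif_pos p.isLt

@[simp]
lemma zeroExtend_zero (x : Fin (N + 1) → ℕ) : zeroExtend x 0 = x 0 := zeroExtend_val x 0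

lemma zeroExtend_of_le (x : Fin N → ℕ) {p : ℕ} (h : N ≤ p) : zeroExtend x p = 0 :=
  dif_neg (by omega)

lemma eq_zeroExtend {x : Fin N → ℕ} {i : ℕ → ℕ} (hx : ∀ p : Fin N, i p = x p)
    (h0 : ∀ p, N ≤ p → i p = 0) : i = zeroExtend x := by
  funext p
  by_cases h : p < N
  · exact (hx ⟨p, h⟩).trans (zeroExtend_val x ⟨p, h⟩).symm
  · rw [h0 p (by omega), zeroExtend_of_le x (by omega)]

lemma zeroExtend_tail (x : Fin (N + 1) → ℕ) :
    zeroExtend (Fin.tail x) = fun p => zeroExtend x (p + 1) := by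
  funext p
  by_cases h : p < N
  · exact (zeroExtend_val (Fin.tail x) ⟨p, h⟩).trans (zeroExtend_val x (Fin.succ ⟨p, h⟩)).symm
  · rw [zeroExtend_of_le _ (by omega), zeroExtend_of_le _ (by omega)]

end ZeroExtend

def linearPart (N : ℕ) (i : ℕ → ℕ) : ℕ := ∑ p ∈ range N, N ! / (N - p) * i p

def residuePart (N j : ℕ) (i : ℕ → ℕ) : ℕ :=
  ∑ ℓ ∈ range (N - 3), N ! / (N - ℓ)! * (N - ℓ - 2)! * bres N j i ℓ

def Admissible (N j k : ℕ) (i : ℕ → ℕ) : Prop :=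
  linearPart N i + residuePart N j i ≤ N ! * k + j * (N - 1)!

instance (N j k : ℕ) : DecidablePred (Admissible N j k) :=
  fun _ => inferInstanceAs (Decidable (_ ≤ _))

lemma mem_Sset_iff {N j k : ℕ} {x : Fin N → ℕ} :
    x ∈ Sset N j k ↔ Admissible N j k (zeroExtend x) := by
  have hcast : ∀ i, (((linearPart N i : ℕ) : ℤ) ≤ N ! * k - residuePart N j i + j * (N - 1)!) ↔
      Admissible N j k i := fun i => by unfold Admissible; omega
  simp only [Sset, Set.mem_ofPred_eq]
  refine ⟨fun hx => (hcast _).1 (hx _ (zeroExtend_val x) fun p => zeroExtend_of_le x), ?_⟩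
  rintro h i hx h0
  rw [eq_zeroExtend hx h0]
  exact (hcast _).2 h

lemma bres_zero_cast (n j : ℕ) (i : ℕ → ℕ) :
    (bres (n + 1) j i 0 : ℤ) = ((i 0 : ℤ) - j) % (n + 1) := by
  rw [bres, Int.toNat_of_nonneg (Int.emod_nonneg _ (by omega))]
  push_cast
  rfl

lemma bres_zero_le (n j : ℕ) (i : ℕ → ℕ) : bres (n + 1) j i 0 ≤ n := by
  have := bres_zero_cast n j i
  have := Int.emod_lt_of_pos ((i 0 : ℤ) - j) (by omega : (0 : ℤ) < n + 1)
  omega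

lemma succ_dvd_add_bres_zero {n j k u : ℕ} {i : ℕ → ℕ} (hu : i 0 + u = (n + 1) * k + j) :
    n + 1 ∣ u + bres (n + 1) j i 0 := by
  refine Int.natCast_dvd_natCast.1 ⟨k - ((i 0 : ℤ) - j) / (n + 1), ?_⟩
  have := Int.emod_def ((i 0 : ℤ) - j) (n + 1)
  push_cast
  rw [bres_zero_cast]
  linarith [congrArg (fun m : ℕ => (m : ℤ)) hu]

lemma bres_succ_of_dvd {n j j' : ℕ} {i : ℕ → ℕ} (h : (n : ℤ) ∣ j' + bres (n + 1) j i 0)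
    (ℓ : ℕ) : bres (n + 1) j i (ℓ + 1) = bres n j' (fun p => i (p + 1)) ℓ := by
  induction ℓ with
  | zero =>
    have hmod : ((i 1 : ℤ) - j') % n = (i 1 + bres (n + 1) j i 0 % n) % n := by
      rw [Int.add_emod_emod]
      exact Int.ModEq.eq (Int.modEq_iff_dvd.2 (by convert h using 1; ring))
    rw [bres, bres, Nat.add_sub_cancel, Nat.zero_add]
    exact_mod_cast (congrArg Int.toNat hmod).symm
  | succ ℓ ih =>
    rw [bres.eq_2 (n + 1) j i (ℓ + 1), bres.eq_2 n j' _ ℓ, ih,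
      show n + 1 - (ℓ + 1 + 1) = n - (ℓ + 1) by omega]

lemma linearPart_succ (n : ℕ) (i : ℕ → ℕ) :
    linearPart (n + 1) i = (n + 1) * linearPart n (fun p => i (p + 1)) + n ! * i 0 := by
  rw [linearPart, linearPart, sum_range_succ', mul_sum]
  congr 1
  · refine sum_congr rfl fun p hp => ?_
    have hp : p < n := mem_range.1 hp
    rw [show n + 1 - (p + 1) = n - p by omega, Nat.factorial_succ,
      Nat.mul_div_assoc _ (Nat.dvd_factorial (by omega) (by omega)), mul_assoc]
  · rw [Nat.sub_zero, Nat.factorial_succ, Nat.mul_div_cancel_left _ n.succ_pos]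

lemma residuePart_succ {n j j' : ℕ} {i : ℕ → ℕ} (h : (n : ℤ) ∣ j' + bres (n + 1) j i 0) :
    residuePart (n + 1) j i = (n + 1) * residuePart n j' (fun p => i (p + 1)) +
      if 3 ≤ n then (n - 1)! * bres (n + 1) j i 0 else 0 := by
  unfold residuePart
  split_ifs with h3
  · rw [show n + 1 - 3 = n - 3 + 1 by omega, sum_range_succ', mul_sum]
    congr 1
    · refine sum_congr rfl fun ℓ hℓ => ?_
      have hℓ : ℓ < n - 3 := mem_range.1 hℓ
      rw [show n + 1 - (ℓ + 1) = n - ℓ by omega, Nat.factorial_succ,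
        Nat.mul_div_assoc _ (Nat.factorial_dvd_factorial (by omega)), bres_succ_of_dvd h]
      ring
    · rw [Nat.sub_zero, Nat.div_self (Nat.factorial_pos _), show n + 1 - 2 = n - 1 by omega,
        one_mul]
  · rw [show n + 1 - 3 = 0 by omega, show n - 3 = 0 by omega]
    simp

lemma mul_le_mul_add_iff {d Y M r : ℕ} (hr : r < d) : d * Y ≤ d * M + r ↔ Y ≤ M := by
  rw [mul_comm d Y, ← Nat.le_div_iff_mul_le (by omega), Nat.mul_add_div (by omega),
    Nat.div_eq_of_lt hr, add_zero]

/-- For `n ≥ 3` the `ℓ = 0` residue term cancels the remainder `b` exactly; for `n < 3` it is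
absent, but then `(n - 1)! = 1` and `b < n + 1` disappears in the floor. -/
lemma succ_mul_add_le_iff {n W V b : ℕ} (hb : b ≤ n) :
    (n + 1) * W + (if 3 ≤ n then (n - 1)! * b else 0) ≤ (n - 1)! * ((n + 1) * V + b) ↔
      W ≤ (n - 1)! * V := by
  split_ifs with h3
  · rw [mul_add, mul_left_comm, add_le_add_iff_right, Nat.mul_le_mul_left_iff n.succ_pos]
  · rw [Nat.factorial_eq_one.2 (by omega), one_mul, one_mul, add_zero]
    exact mul_le_mul_add_iff (by omega)

lemma head_le_of_admissible {n j k : ℕ} {i : ℕ → ℕ} (h : Admissible (n + 1) j k i) :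
    i 0 ≤ (n + 1) * k + j := by
  refine Nat.le_of_mul_le_mul_left ?_ (Nat.factorial_pos n)
  calc n ! * i 0 ≤ linearPart (n + 1) i := by rw [linearPart_succ]; omega
    _ ≤ (n + 1)! * k + j * n ! := le_of_add_le_left h
    _ = n ! * ((n + 1) * k + j) := by rw [Nat.factorial_succ]; ring

lemma mul_div_succ_add_eq {n u b c : ℕ} (hb : b ≤ n) (h : u + b = (n + 1) * c) :
    n * u = (n + 1) * (n * u / (n + 1)) + b ∧ n * u / (n + 1) + b = n * c := by
  have hc : b ≤ n * c := by
    rcases c with _ | c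
    · omega
    · nlinarith
  have hV : n * u / (n + 1) = n * c - b := by
    apply Nat.div_eq_of_lt_le <;> zify [hc] at h ⊢ <;> nlinarith
  rw [hV]
  constructor
  · zify [hc] at h ⊢; nlinarith
  · omega

lemma admissible_succ_iff {n j k : ℕ} (hn : 1 ≤ n) (x : Fin (n + 1) → ℕ) :
    Admissible (n + 1) j k (zeroExtend x) ↔ x 0 ≤ (n + 1) * k + j ∧
      Admissible n (n * ((n + 1) * k + j - x 0) / (n + 1) % n)
        (n * ((n + 1) * k + j - x 0) / (n + 1) / n) (zeroExtend (Fin.tail x)) := by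
  by_cases hx : x 0 ≤ (n + 1) * k + j
  swap
  · exact iff_of_false (fun h => hx (by simpa using head_le_of_admissible h)) fun h => hx h.1
  obtain ⟨u, hu⟩ : ∃ u, x 0 + u = (n + 1) * k + j := ⟨_, Nat.add_sub_of_le hx⟩
  rw [and_iff_right hx, show (n + 1) * k + j - x 0 = u by omega]
  set b := bres (n + 1) j (zeroExtend x) 0 with hb_def
  set V := n * u / (n + 1)
  have hb : b ≤ n := bres_zero_le n j _
  obtain ⟨c, hc⟩ := succ_dvd_add_bres_zero (i := zeroExtend x) (by rwa [zeroExtend_zero])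
  obtain ⟨hV, hVb⟩ := mul_div_succ_add_eq hb hc
  have hdvd : (n : ℤ) ∣ (V % n : ℕ) + b := by
    have : n ∣ V % n + b := by
      rw [Nat.dvd_iff_mod_eq_zero, Nat.mod_add_mod, hVb, Nat.mul_mod_right]
    exact_mod_cast this
  have hrhs : (n + 1)! * k + j * (n + 1 - 1)! = n ! * x 0 + (n - 1)! * ((n + 1) * V + b) := by
    rw [Nat.add_sub_cancel, ← hV, Nat.factorial_succ, ← Nat.mul_factorial_pred (by omega : n ≠ 0)]
    calc (n + 1) * (n * (n - 1)!) * k + j * (n * (n - 1)!)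
        = n * (n - 1)! * ((n + 1) * k + j) := by ring
      _ = n * (n - 1)! * x 0 + (n - 1)! * (n * u) := by rw [← hu]; ring
  have hlhs : n ! * (V / n) + V % n * (n - 1)! = (n - 1)! * V := by
    rw [← Nat.mul_factorial_pred (by omega : n ≠ 0)]
    nth_rw 3 [← Nat.div_add_mod V n]
    ring
  rw [Admissible, Admissible, linearPart_succ, residuePart_succ hdvd, hrhs, hlhs,
    zeroExtend_zero, ← hb_def, ← zeroExtend_tail, ← succ_mul_add_le_iff hb]
  constructor <;> intro h <;> linarith

def admissibleFinset (N j k : ℕ) : Finset (Fin N → ℕ) :=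
  {x ∈ Fintype.piFinset fun _ => range (N ! * k + j * (N - 1)! + 1) |
    Admissible N j k (zeroExtend x)}

lemma le_of_admissible {N j k : ℕ} {x : Fin N → ℕ} (h : Admissible N j k (zeroExtend x))
    (p : Fin N) : x p ≤ N ! * k + j * (N - 1)! :=
  calc x p ≤ N ! / (N - p) * zeroExtend x p := by
        rw [zeroExtend_val]
        exact Nat.le_mul_of_pos_left _
          (Nat.div_pos ((Nat.sub_le N p).trans N.self_le_factorial) (by omega))
    _ ≤ linearPart N (zeroExtend x) :=
        single_le_sum (f := fun q => N ! / (N - q) * zeroExtend x q) (fun _ _ => Nat.zero_le _)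
          (mem_range.2 p.isLt)
    _ ≤ N ! * k + j * (N - 1)! := le_of_add_le_left h

lemma mem_admissibleFinset {N j k : ℕ} {x : Fin N → ℕ} :
    x ∈ admissibleFinset N j k ↔ Admissible N j k (zeroExtend x) := by
  rw [admissibleFinset, mem_filter, and_iff_right_iff_imp, Fintype.mem_piFinset]
  exact fun h p => mem_range.2 (Nat.lt_succ_of_le (le_of_admissible h p))

lemma Sset_eq_admissibleFinset (N j k : ℕ) : Sset N j k = admissibleFinset N j k := by
  ext x
  rw [mem_coe, mem_admissibleFinset, mem_Sset_iff]

lemma card_filter_head_eq {α : Type*} [DecidableEq α] {n : ℕ} {s : Finset (Fin (n + 1) → α)}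
    {t : Finset (Fin n → α)} {a : α} (h : ∀ y, Fin.cons a y ∈ s ↔ y ∈ t) :
    #{x ∈ s | x 0 = a} = #t := by
  refine card_nbij' Fin.tail (fun y => Fin.cons a y) ?_ ?_ ?_ ?_
  · rintro x hx
    obtain ⟨hs, rfl⟩ := mem_filter.1 hx
    rw [mem_coe, ← h, Fin.cons_self_tail]
    exact hs
  · exact fun y hy => mem_filter.2 ⟨(h y).2 hy, Fin.cons_zero _ _⟩
  · rintro x hx
    obtain ⟨-, rfl⟩ := mem_filter.1 hx
    exact Fin.cons_self_tail x
  · exact fun y _ => Fin.tail_cons _ _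

lemma card_admissibleFinset_succ {n : ℕ} (hn : 1 ≤ n) (j k : ℕ) :
    #(admissibleFinset (n + 1) j k) = ∑ i₀ ∈ range ((n + 1) * k + j + 1),
      #(admissibleFinset n (n * ((n + 1) * k + j - i₀) / (n + 1) % n)
        (n * ((n + 1) * k + j - i₀) / (n + 1) / n)) := by
  rw [card_eq_sum_card_fiberwise (f := fun x : Fin (n + 1) → ℕ => x 0)
    (t := range ((n + 1) * k + j + 1))]
  · refine sum_congr rfl fun i₀ hi₀ => card_filter_head_eq fun y => ?_
    rw [mem_admissibleFinset, mem_admissibleFinset, admissible_succ_iff hn, Fin.cons_zero,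
      Fin.tail_cons, and_iff_right (Nat.le_of_lt_succ (mem_range.1 hi₀))]
  · intro x hx
    have hx := (admissible_succ_iff hn x).1 (mem_admissibleFinset.1 hx)
    exact mem_range.2 (Nat.lt_succ_of_le hx.1)

lemma card_admissibleFinset_one (U : ℕ) : #(admissibleFinset 1 0 U) = U + 1 := by
  have hbox : admissibleFinset 1 0 U = Fintype.piFinset fun _ => range (U + 1) := by
    rw [admissibleFinset, Nat.factorial_one, one_mul, zero_mul, add_zero]
    refine filter_true_of_mem fun x hx => ?_
    simpa [Admissible, linearPart, residuePart] using Fintype.mem_piFinset.1 hx 0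
  simp [hbox]

/-- The dimension of `V(k)^{⊗(N-j)} ⊗ V(k+1)^{⊗j}`, indexed by `U = N k + j`. -/
def fusionDim (N U : ℕ) : ℕ := (U / N + 1) ^ (N - U % N) * (U / N + 2) ^ (U % N)

lemma fusionDim_mul_add {N q r : ℕ} (hr : r < N) :
    fusionDim N (N * q + r) = (q + 1) ^ (N - r) * (q + 2) ^ r := by
  rw [fusionDim, Nat.mul_add_div (by omega), Nat.div_eq_of_lt hr, add_zero, Nat.mul_add_mod,
    Nat.mod_eq_of_lt hr]

lemma fusionDim_succ_add_one {n : ℕ} (hn : 0 < n) (U : ℕ) :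
    fusionDim (n + 1) (U + 1) = fusionDim (n + 1) U + fusionDim n (n * (U + 1) / (n + 1)) := by
  obtain ⟨q, r, hr, rfl⟩ : ∃ q r, r < n + 1 ∧ U = (n + 1) * q + r :=
    ⟨U / (n + 1), U % (n + 1), Nat.mod_lt _ n.succ_pos, (Nat.div_add_mod U (n + 1)).symm⟩
  rcases Nat.lt_or_ge r n with hrn | hrn
  · obtain ⟨s, rfl⟩ : ∃ s, n = r + s + 1 := ⟨n - r - 1, by omega⟩
    have hV : (r + s + 1) * ((r + s + 1 + 1) * q + r + 1) / (r + s + 1 + 1) =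
        (r + s + 1) * q + r := Nat.div_eq_of_lt_le (by nlinarith) (by nlinarith)
    rw [add_assoc _ r 1, fusionDim_mul_add (by omega), fusionDim_mul_add hr, ← add_assoc, hV,
      fusionDim_mul_add hrn, show r + s + 1 + 1 - r = s + 1 + 1 by omega,
      show r + s + 1 + 1 - (r + 1) = s + 1 by omega, show r + s + 1 - r = s + 1 by omega]
    ring
  · obtain rfl : n = r := by omega
    have hV : n * ((n + 1) * (q + 1) + 0) / (n + 1) = n * (q + 1) + 0 := by
      rw [add_zero, add_zero, Nat.mul_left_comm, Nat.mul_div_cancel_left _ n.succ_pos]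
    rw [show (n + 1) * q + n + 1 = (n + 1) * (q + 1) + 0 by ring, hV,
      fusionDim_mul_add (by omega : 0 < n + 1), fusionDim_mul_add (by omega : n < n + 1),
      fusionDim_mul_add hn]
    simp only [Nat.sub_zero, Nat.add_sub_cancel_left]
    ring

lemma fusionDim_succ_eq_sum {n : ℕ} (hn : 0 < n) (U : ℕ) :
    fusionDim (n + 1) U = ∑ u ∈ range (U + 1), fusionDim n (n * u / (n + 1)) := by
  induction U with
  | zero => simp [fusionDim]
  | succ U ih => rw [sum_range_succ, ← ih, fusionDim_succ_add_one hn]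

theorem card_admissibleFinset {N : ℕ} (hN : 1 ≤ N) (U : ℕ) :
    #(admissibleFinset N (U % N) (U / N)) = fusionDim N U := by
  induction N, hN using Nat.le_induction generalizing U with
  | base =>
    rw [Nat.mod_one, Nat.div_one, card_admissibleFinset_one, fusionDim, Nat.mod_one, Nat.div_one]
    simp
  | succ n hn ih =>
    rw [card_admissibleFinset_succ hn, Nat.div_add_mod, fusionDim_succ_eq_sum hn,
      ← sum_range_reflect]
    refine sum_congr rfl fun u hu => ?_
    rw [ih, Nat.add_sub_cancel, Nat.sub_sub_self (Nat.le_of_lt_succ (mem_range.1 hu))]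

end Sset

theorem Sset_card_general (N j k : ℕ) (hj : j < N) :
    Nat.card (Sset N j k) = (k + 1) ^ (N - j) * (k + 2) ^ j := by
  have hdiv : (N * k + j) / N = k := by
    rw [Nat.mul_add_div (by omega), Nat.div_eq_of_lt hj, add_zero]
  have hmod : (N * k + j) % N = j := by rw [Nat.mul_add_mod, Nat.mod_eq_of_lt hj]
  have hcard := Sset.card_admissibleFinset (Nat.zero_lt_of_lt hj) (N * k + j)
  rw [hdiv, hmod, Sset.fusionDim_mul_add hj] at hcard
  rw [Sset.Sset_eq_admissibleFinset, Nat.card_coe_set_eq, Set.ncard_coe_finset, hcard]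

/-- The cardinality of `S(k^{N−j},(k+1)^j)` equals `(k+1)^{N−j}·(k+2)^j`, the dimension
of the fusion product `V(k)^{*(N−j)} * V(k+1)^{*j}` of `sl₂`-modules. -/
theorem Sset_card (N j k : ℕ) (hN : 1 ≤ N) (hj : j < N) :
    Nat.card (Sset N j k) = (k + 1) ^ (N - j) * (k + 2) ^ j :=
  Sset_card_general N j k hj
end

section
/- For N = 4 and k = 2: the set S(2^4) consists of quadruples (i_0,i_1,i_2,i_3) of nonnegative integers with 6i_0 + 8i_1 + 12i_2 + 24i_3 ≤ 48 − 2b_0, where b_0 is the residue of i_0 modulo 4 (i.e. 0 ≤ b_0 < 4, i_0 ≡ b_0 mod 4). The cardinality of S(2^4) is 81. -/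
/-- For `N = 4`, `k = 2`, `j = 0`: `S(2⁴)` is the set of quadruples `(i_0,i_1,i_2,i_3)`
with `6i_0 + 8i_1 + 12i_2 + 24i_3 ≤ 48 − 2b_0` where `b_0 = i_0 mod 4`, and it has `81`
elements. -/
theorem Sset_two_four :
    Sset 4 0 2 = {x : Fin 4 → ℕ |
        6 * x 0 + 8 * x 1 + 12 * x 2 + 24 * x 3 ≤ 48 - 2 * (x 0 % 4)} ∧
    Nat.card (Sset 4 0 2) = 81 := by
  have hset : Sset 4 0 2 = {x : Fin 4 → ℕ |
      6 * x 0 + 8 * x 1 + 12 * x 2 + 24 * x 3 ≤ 48 - 2 * (x 0 % 4)} := by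
    ext x
    constructor
    · intro hx
      have h := hx (fun p => if h : p < 4 then x ⟨p, h⟩ else 0)
        (by intro p; simp [p.isLt]) (by intro p hp; simp [Nat.not_lt.2 hp])
      simp [Finset.sum_range_succ, Nat.factorial, bres, Fin.isValue] at h
      simp only [Set.mem_setOf_eq]
      omega
    · intro hx i hi hz
      have h0 : i 0 = x 0 := hi ⟨0, by norm_num⟩
      have h1 : i 1 = x 1 := hi ⟨1, by norm_num⟩
      have h2 : i 2 = x 2 := hi ⟨2, by norm_num⟩
      have h3 : i 3 = x 3 := hi ⟨3, by norm_num⟩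
      simp only [Set.mem_setOf_eq] at hx
      simp [Finset.sum_range_succ, Nat.factorial, bres, Fin.isValue]
      omega
  refine ⟨hset, ?_⟩
  rw [hset]
  have h : {x : Fin 4 → ℕ |
      6 * x 0 + 8 * x 1 + 12 * x 2 + 24 * x 3 ≤ 48 - 2 * (x 0 % 4)} =
      ↑((Finset.Icc 0 ![8, 6, 4, 2]).filter
        (fun x => 6 * x 0 + 8 * x 1 + 12 * x 2 + 24 * x 3 ≤ 48 - 2 * (x 0 % 4))) := by
    ext x
    simp only [Finset.coe_filter, Set.mem_setOf_eq, Finset.mem_Icc, iff_and_self]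
    intro hx
    refine ⟨fun p => Nat.zero_le _, fun p => ?_⟩
    fin_cases p <;> simp <;> omega
  rw [h, Nat.card_coe_set_eq, Set.ncard_coe_finset]
  decide
end

section
/- Combinatorial recursion for PBW bases (Lemma 4.7 shape): define sets of monomials B(k_1,…,k_N) in commuting variables f_0, f_1, f_2, … recursively by B() = {1} and B(k_1,…,k_N) = sh(B(k_1,…,k_{N−1})) ∪ f_0·B(k_1,…,k_N−1) for k_1 ≤ … ≤ k_N (where sh replaces each f_i by f_{i+1}, and B(k_1,…,k_{N−1},0) := B(k_1,…,k_{N−1}) after dropping the zero). Then for all k, N ≥ 1: B(k^N) = ⋃_{r=0}^{k} f_0^{Nr}·sh(B((k−r)^{N−1})) ∪ ⋃_{j=1}^{N−1} ⋃_{r=1}^{k} f_0^{Nr−j}·sh(B((k−r)^{N−j},(k−r+1)^{j−1})). -/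
/-- Monomials in the free commutative monoid on generators `f_0, f_1, f_2, …` are
finitely supported exponent vectors `ℕ →₀ ℕ`; `f_i` is `Finsupp.single i 1` and the
monoid operation is addition of exponents. -/
noncomputable def shMon : (ℕ →₀ ℕ) → (ℕ →₀ ℕ) :=
  Finsupp.mapDomain (· + 1)

/-- Re-sort a list of natural numbers in nonincreasing order. -/
def sortDesc (l : List ℕ) : List ℕ :=
  l.insertionSort (fun a b => b ≤ a)

/-- Fuelled version of the recursion
`B() = {1}`, `B(k_1,…,k_N) = sh(B(k_1,…,k_{N−1})) ∪ f_0·B(sorted(k_1,…,k_N − 1))`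
(dropping zero entries), where a tuple `k_1 ≤ ⋯ ≤ k_N` is represented by the
*nonincreasing* list `[k_N, …, k_1]`.  The fuel `l.sum + l.length` always suffices. -/
noncomputable def BsetAux : ℕ → List ℕ → Set (ℕ →₀ ℕ)
  | 0, _ => {0}
  | _ + 1, [] => {0}
  | fuel + 1, 0 :: ks => BsetAux fuel ks
  | fuel + 1, (k + 1) :: ks =>
      shMon '' BsetAux fuel ks ∪
        (fun v => Finsupp.single 0 1 + v) '' BsetAux fuel (sortDesc (k :: ks))

/-- The set of monomials `B(k_1,…,k_N)` (the list is the nonincreasing list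
`[k_N,…,k_1]`). -/
noncomputable def Bset (l : List ℕ) : Set (ℕ →₀ ℕ) :=
  BsetAux (l.sum + l.length) l

/-!
Unfolding the recursion at the largest entry of `((s+1)^j, s^m)` produces one shifted term and
turns one entry `s + 1` into `s`; after `j` steps this leaves `f_0^j · B(s^(m+j))`. For
`(k^N)` the shifted terms are exactly the summands with `r = 0` and `r = 1` of the claimed
formula, and the remaining `f_0^N · B((k-1)^N)` supplies the summands with `r ≥ 2` by induction
on `k`.
-/

open Pointwise List

section reindex

variable {α : Type*}

lemma Finset.set_biUnion_range_succ_eq (F : ℕ → Set α) (k : ℕ) :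
    ⋃ r ∈ Finset.range (k + 1), F r = F 0 ∪ ⋃ r ∈ Finset.range k, F (r + 1) := by
  simpa only [Finset.mem_range] using Set.biUnion_lt_succ' F k

lemma Finset.set_biUnion_Icc_one_succ_eq (F : ℕ → Set α) (k : ℕ) :
    ⋃ r ∈ Finset.Icc 1 (k + 1), F r = F 1 ∪ ⋃ r ∈ Finset.Icc 1 k, F (r + 1) := by
  rw [← Finset.insert_Icc_add_one_left_eq_Icc (by omega), Finset.set_biUnion_insert,
    ← Finset.image_add_right_Icc, Finset.set_biUnion_finset_image]

lemma Finset.set_biUnion_Icc_one_eq (F : ℕ → Set α) (n : ℕ) :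
    ⋃ j ∈ Finset.Icc 1 n, F j = ⋃ i < n, F (i + 1) := by
  ext x
  simp only [Set.mem_iUnion, Finset.mem_Icc, exists_prop]
  constructor
  · rintro ⟨j, ⟨hj₁, hj⟩, hx⟩
    exact ⟨j - 1, by omega, by rwa [Nat.sub_add_cancel hj₁]⟩
  · rintro ⟨i, hi, hx⟩
    exact ⟨i + 1, by omega, hx⟩

end reindex

lemma shMon_zero : shMon 0 = 0 := Finsupp.mapDomain_zero

lemma sortDesc_perm (l : List ℕ) : sortDesc l ~ l :=
  List.perm_insertionSort _ l

lemma sortDesc_eq_of_perm {l l' : List ℕ} (hp : l ~ l') (hs : l'.Pairwise (· ≥ ·)) :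
    sortDesc l = l' :=
  ((sortDesc_perm l).trans hp).eq_of_sortedGE
    (List.pairwise_insertionSort (fun a b : ℕ => b ≤ a) l).sortedGE hs.sortedGE

lemma BsetAux_congr_fuel {f₁ f₂ : ℕ} {l : List ℕ} (h₁ : l.sum + l.length ≤ f₁)
    (h₂ : l.sum + l.length ≤ f₂) : BsetAux f₁ l = BsetAux f₂ l := by
  induction f₁ generalizing f₂ l with
  | zero =>
    obtain rfl : l = [] := List.eq_nil_of_length_eq_zero (by omega)
    cases f₂ <;> rfl
  | succ f ih =>
    rcases f₂ with _ | g
    · obtain rfl : l = [] := List.eq_nil_of_length_eq_zero (by omega)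
      rfl
    rcases l with _ | ⟨_ | a, ks⟩
    · rfl
    all_goals simp only [List.sum_cons, List.length_cons] at h₁ h₂
    · exact ih (by omega) (by omega)
    · have hs := sortDesc_perm (a :: ks)
      simp only [BsetAux]
      rw [ih (f₂ := g) (l := ks) (by omega) (by omega),
        ih (f₂ := g) (l := sortDesc (a :: ks)) ?_ ?_] <;>
        simp only [hs.sum_eq, hs.length_eq, List.sum_cons, List.length_cons] <;> omega

lemma Bset_nil : Bset [] = {0} := rfl

lemma Bset_cons_zero (ks : List ℕ) : Bset (0 :: ks) = Bset ks := by
  simp only [Bset, List.sum_cons, List.length_cons, zero_add]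
  rfl

lemma Bset_cons_succ (a : ℕ) (ks : List ℕ) :
    Bset ((a + 1) :: ks) =
      shMon '' Bset ks ∪ (Finsupp.single 0 1 +ᵥ Bset (sortDesc (a :: ks))) := by
  have hs := sortDesc_perm (a :: ks)
  rw [Bset, show ((a + 1) :: ks).sum + ((a + 1) :: ks).length
    = (ks.sum + a + ks.length + 1) + 1 by simp only [List.sum_cons, List.length_cons]; omega]
  simp only [BsetAux, Bset]
  rw [BsetAux_congr_fuel (l := ks) (by omega) le_rfl,
    BsetAux_congr_fuel (l := sortDesc (a :: ks)) (by simp [hs.sum_eq, hs.length_eq]; omega) le_rfl]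
  rfl

lemma Bset_replicate_zero (m : ℕ) : Bset (replicate m 0) = {0} := by
  induction m with
  | zero => rfl
  | succ m ih => rw [replicate_succ, Bset_cons_zero, ih]

lemma sortDesc_cons_replicate_append_replicate (s j m : ℕ) :
    sortDesc (s :: (replicate j (s + 1) ++ replicate m s)) =
      replicate j (s + 1) ++ replicate (m + 1) s := by
  refine sortDesc_eq_of_perm List.perm_middle.symm ?_
  simp only [List.pairwise_append, List.pairwise_replicate, List.mem_replicate]
  grind

lemma Bset_replicate_append_replicate (s m j : ℕ) :
    Bset (replicate j (s + 1) ++ replicate m s) =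
      (⋃ i < j, Finsupp.single 0 (j - 1 - i) +ᵥ
        shMon '' Bset (replicate i (s + 1) ++ replicate (m + (j - 1 - i)) s)) ∪
      (Finsupp.single 0 j +ᵥ Bset (replicate (m + j) s)) := by
  induction j generalizing m with
  | zero => simp
  | succ j ih =>
    rw [replicate_succ, cons_append, Bset_cons_succ, sortDesc_cons_replicate_append_replicate,
      ih (m + 1), Set.biUnion_lt_succ, Nat.add_sub_cancel, Nat.sub_self, Finsupp.single_zero,
      zero_vadd, add_zero]
    have hstep : ∀ i < j, Finsupp.single 0 1 +ᵥ (Finsupp.single 0 (j - 1 - i) +ᵥ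
        shMon '' Bset (replicate i (s + 1) ++ replicate (m + 1 + (j - 1 - i)) s)) =
        Finsupp.single 0 (j - i) +ᵥ shMon '' Bset (replicate i (s + 1) ++ replicate (m + (j - i)) s) := by
      intro i hi
      rw [vadd_vadd, ← Finsupp.single_add, show 1 + (j - 1 - i) = j - i by omega,
        show m + 1 + (j - 1 - i) = m + (j - i) by omega]
    rw [Set.vadd_set_union, Set.vadd_set_iUnion₂, Set.iUnion₂_congr hstep, vadd_vadd,
      ← Finsupp.single_add, add_comm 1 j, add_right_comm m 1 j, add_assoc m j 1]
    ac_rfl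

lemma Bset_replicate_succ_succ (n k : ℕ) :
    Bset (replicate (n + 1) (k + 1)) =
      shMon '' Bset (replicate n (k + 1)) ∪
      (⋃ j ∈ Finset.Icc 1 n, Finsupp.single 0 (n + 1 - j) +ᵥ
        shMon '' Bset (replicate (j - 1) (k + 1) ++ replicate (n + 1 - j) k)) ∪
      (Finsupp.single 0 (n + 1) +ᵥ Bset (replicate (n + 1) k)) := by
  have hchain := Bset_replicate_append_replicate k 0 (n + 1)
  simp only [replicate_zero, append_nil, zero_add, Nat.add_sub_cancel, Set.biUnion_lt_succ,
    Nat.sub_self, Finsupp.single_zero, zero_vadd] at hchain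
  rw [hchain, Finset.set_biUnion_Icc_one_eq]
  simp only [Nat.add_sub_cancel, Nat.add_sub_add_right]
  ac_rfl

theorem Bset_replicate_succ (n k : ℕ) :
    Bset (replicate (n + 1) k) =
      (⋃ r ∈ Finset.range (k + 1),
        Finsupp.single 0 ((n + 1) * r) +ᵥ shMon '' Bset (replicate n (k - r))) ∪
      ⋃ j ∈ Finset.Icc 1 n, ⋃ r ∈ Finset.Icc 1 k,
        Finsupp.single 0 ((n + 1) * r - j) +ᵥ
          shMon '' Bset (replicate (j - 1) (k - r + 1) ++ replicate (n + 1 - j) (k - r)) := by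
  induction k with
  | zero => simp [Bset_replicate_zero, shMon_zero]
  | succ k ih =>
    have hfirst : Finsupp.single 0 (n + 1) +ᵥ ⋃ r ∈ Finset.range (k + 1),
          Finsupp.single 0 ((n + 1) * r) +ᵥ shMon '' Bset (replicate n (k - r)) =
        ⋃ r ∈ Finset.range (k + 1), Finsupp.single 0 ((n + 1) * (r + 1)) +ᵥ
          shMon '' Bset (replicate n (k + 1 - (r + 1))) := by
      rw [Set.vadd_set_iUnion₂]
      refine Set.iUnion₂_congr fun r _ => ?_
      rw [vadd_vadd, ← Finsupp.single_add, Nat.add_sub_add_right, mul_add_one, add_comm]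
    have hsecond : Finsupp.single 0 (n + 1) +ᵥ ⋃ j ∈ Finset.Icc 1 n, ⋃ r ∈ Finset.Icc 1 k,
          Finsupp.single 0 ((n + 1) * r - j) +ᵥ
            shMon '' Bset (replicate (j - 1) (k - r + 1) ++ replicate (n + 1 - j) (k - r)) =
        ⋃ j ∈ Finset.Icc 1 n, ⋃ r ∈ Finset.Icc 1 k,
          Finsupp.single 0 ((n + 1) * (r + 1) - j) +ᵥ shMon '' Bset
            (replicate (j - 1) (k + 1 - (r + 1) + 1) ++ replicate (n + 1 - j) (k + 1 - (r + 1))) := by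
      simp only [Set.vadd_set_iUnion₂, vadd_vadd, ← Finsupp.single_add, Nat.add_sub_add_right]
      refine Set.iUnion₂_congr fun j hj => Set.iUnion₂_congr fun r hr => ?_
      rw [Finset.mem_Icc] at hj hr
      have : j ≤ (n + 1) * r := le_trans (by omega) (Nat.le_mul_of_pos_right (n + 1) (by omega))
      rw [mul_add_one, add_comm _ (n + 1), Nat.add_sub_assoc this]
    rw [Bset_replicate_succ_succ, ih, Set.vadd_set_union, hfirst, hsecond,
      Finset.set_biUnion_range_succ_eq _ (k + 1)]
    simp only [Finset.set_biUnion_Icc_one_succ_eq _ k, Set.iUnion_union_distrib, mul_zero, mul_one,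
      Nat.sub_zero, Nat.add_sub_cancel, Finsupp.single_zero, zero_vadd]
    ac_rfl

theorem Bset_recursion_general (k N : ℕ) :
    Bset (List.replicate N k) =
      (⋃ r ∈ Finset.range (k + 1),
        (fun v => Finsupp.single 0 (N * r) + v) ''
          (shMon '' Bset (List.replicate (N - 1) (k - r)))) ∪
      ⋃ j ∈ Finset.Icc 1 (N - 1), ⋃ r ∈ Finset.Icc 1 k,
        (fun v => Finsupp.single 0 (N * r - j) + v) ''
          (shMon ''
            Bset (List.replicate (j - 1) (k - r + 1) ++ List.replicate (N - j) (k - r))) := by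
  rcases N with _ | n
  · simp only [replicate_zero, Bset_nil, zero_tsub, Set.image_singleton, shMon_zero, zero_mul,
      Finsupp.single_zero, zero_add, Set.image_id', Finset.Icc_eq_empty_of_lt zero_lt_one,
      Finset.notMem_empty, Set.iUnion_of_empty, Set.iUnion_empty, Set.union_empty,
      Finset.set_biUnion_range_succ_eq]
    exact (Set.union_eq_left.2 (Set.iUnion₂_subset fun _ _ => subset_rfl)).symm
  · exact Bset_replicate_succ n k

/-- Lemma 4.7:
`B(k^N) = ⋃_{r=0}^{k} f_0^{Nr}·sh(B((k−r)^{N−1}))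
  ∪ ⋃_{j=1}^{N−1} ⋃_{r=1}^{k} f_0^{Nr−j}·sh(B((k−r)^{N−j},(k−r+1)^{j−1}))`. -/
theorem Bset_recursion (k N : ℕ) (hk : 1 ≤ k) (hN : 1 ≤ N) :
    Bset (List.replicate N k) =
      (⋃ r ∈ Finset.range (k + 1),
        (fun v => Finsupp.single 0 (N * r) + v) ''
          (shMon '' Bset (List.replicate (N - 1) (k - r)))) ∪
      ⋃ j ∈ Finset.Icc 1 (N - 1), ⋃ r ∈ Finset.Icc 1 k,
        (fun v => Finsupp.single 0 (N * r - j) + v) ''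
          (shMon ''
            Bset (List.replicate (j - 1) (k - r + 1) ++ List.replicate (N - j) (k - r))) :=
  Bset_recursion_general k N
end

section
/- For sl_2 and N ≥ 1: the set S(1^N) (the case k = 1, j = 0) consists of N-tuples (i_0,…,i_{N−1}) of nonnegative integers with ∑_{p=0}^{N−1}(N!/(N−p))·i_p ≤ N! − ∑_{ℓ=0}^{N−4}(N!/(N−ℓ)!)(N−ℓ−2)!·b_ℓ (with b_ℓ the residues from the congruence recursion with j = 0), and |S(1^N)| = 2^N. Moreover for N = 4, the tuple (0,3,0,0) (corresponding to f_1^3) belongs to S(1^4): indeed 8·3 = 24 ≤ 24 − 2b_0 with b_0 = 0 since i_0 = 0 ≡ 0 mod 4. -/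
/-!
Write the congruence recursion as division with remainder,
`i_ℓ + b_{ℓ-1} = (N - ℓ) c_ℓ + b_ℓ`. Summation by parts turns
`∑ (N!/(N-p)) i_p + ∑_{ℓ ≤ N-2} (N!/(N-ℓ)!) (N-ℓ-2)! b_ℓ` into `N! ∑ c_ℓ`, and the two terms
`ℓ = N - 3, N - 2` that the definition leaves out are less than `N!`. So for `k = 1, j = 0` the
defining inequality says that at most one carry occurs, and following the partial sums of `i`
this happens exactly when every `l` with `i_l ≠ 0` satisfies `l + ∑ i ≤ N`. The tuples with
`∑ i = s` satisfying this are the weak compositions of `s` into `N + 1 - s` parts, counted by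
`N choose s`; summing over `s` gives `2^N`.
-/

namespace Sset

open Finset

variable {N : ℕ} {i : ℕ → ℕ}

/-- `b_{ℓ-1}`, with the convention `b_{-1} = 0`. -/
def bresPrev (N : ℕ) (i : ℕ → ℕ) : ℕ → ℕ
  | 0 => 0
  | ℓ + 1 => bres N 0 i ℓ

/-- The quotient accompanying the residue `b_ℓ = (i_ℓ + b_{ℓ-1}) mod (N - ℓ)`. -/
def carry (N : ℕ) (i : ℕ → ℕ) (ℓ : ℕ) : ℕ :=
  (i ℓ + bresPrev N i ℓ) / (N - ℓ)

lemma bres_eq_mod (ℓ : ℕ) : bres N 0 i ℓ = (i ℓ + bresPrev N i ℓ) % (N - ℓ) := by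
  cases ℓ with
  | zero =>
    simp only [bres, bresPrev, Nat.cast_zero, sub_zero, ← Int.natCast_mod, Int.toNat_natCast,
      add_zero, Nat.sub_zero]
  | succ ℓ => exact Nat.add_mod_mod _ _ _

lemma mul_carry_add_bres (ℓ : ℕ) :
    (N - ℓ) * carry N i ℓ + bres N 0 i ℓ = i ℓ + bresPrev N i ℓ := by
  rw [bres_eq_mod]
  exact Nat.div_add_mod _ _

lemma bres_lt {ℓ : ℕ} (h : ℓ < N) : bres N 0 i ℓ < N - ℓ := by
  rw [bres_eq_mod]
  exact Nat.mod_lt _ (by omega)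

lemma bres_sub_one (hN : N ≠ 0) : bres N 0 i (N - 1) = 0 := by
  have := bres_lt (i := i) (show N - 1 < N by omega)
  omega

/-- Summation by parts along the carry recursion. -/
lemma sum_mul_add_sum_mul_bres (w v : ℕ → ℕ) (L : ℕ) (hwv : ∀ p < L, w p + v p = w (p + 1)) :
    ∑ p ∈ range (L + 1), w p * i p + ∑ p ∈ range L, v p * bres N 0 i p =
      ∑ ℓ ∈ range (L + 1), w ℓ * (N - ℓ) * carry N i ℓ + w L * bres N 0 i L := by
  induction L with
  | zero =>
    have h := mul_carry_add_bres (N := N) (i := i) 0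
    simp only [bresPrev, add_zero] at h
    simp only [zero_add, range_one, sum_singleton, range_zero, sum_empty, add_zero, ← h]
    ring
  | succ L ih =>
    have h := mul_carry_add_bres (N := N) (i := i) (L + 1)
    have hL := hwv L (by omega)
    simp only [bresPrev] at h
    have ih := ih fun p hp => hwv p (by omega)
    rw [sum_range_succ (fun p => w p * i p) (L + 1), sum_range_succ (fun p => v p * bres N 0 i p) L,
      sum_range_succ (fun ℓ => w ℓ * (N - ℓ) * carry N i ℓ) (L + 1)]
    linear_combination ih + bres N 0 i L * hL - w (L + 1) * h

lemma sum_mul_carry_le_sum (L : ℕ) :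
    ∑ ℓ ∈ range L, (N - ℓ) * carry N i ℓ ≤ ∑ p ∈ range L, i p := by
  cases L with
  | zero => simp
  | succ L =>
    have h := sum_mul_add_sum_mul_bres (N := N) (i := i) (fun _ => 1) (fun _ => 0) L (by simp)
    simp only [one_mul, zero_mul, sum_const_zero, add_zero] at h
    omega

lemma sum_eq_sum_mul_carry (hN : N ≠ 0) :
    ∑ p ∈ range N, i p = ∑ ℓ ∈ range N, (N - ℓ) * carry N i ℓ := by
  have h := sum_mul_add_sum_mul_bres (N := N) (i := i) (fun _ => 1) (fun _ => 0) (N - 1) (by simp)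
  simpa only [one_mul, zero_mul, sum_const_zero, add_zero, Nat.sub_add_cancel
    (Nat.one_le_iff_ne_zero.2 hN), bres_sub_one hN] using h

def iCoeff (N p : ℕ) : ℕ := N.factorial / (N - p)

def bCoeff (N p : ℕ) : ℕ := N.factorial / (N - p).factorial * (N - p - 2).factorial

lemma iCoeff_mul_sub {p : ℕ} (hp : p < N) : iCoeff N p * (N - p) = N.factorial :=
  Nat.div_mul_cancel (Nat.dvd_factorial (by omega) (by omega))

lemma bCoeff_mul_sub_one_mul_sub {p : ℕ} (hp : p + 1 < N) :
    bCoeff N p * ((N - p - 1) * (N - p)) = N.factorial := by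
  obtain ⟨m, hm⟩ : ∃ m, N - p = m + 2 := ⟨N - p - 2, by omega⟩
  have hfac : (N - p).factorial = (N - p) * (N - p - 1) * (N - p - 2).factorial := by
    rw [hm, show m + 2 - 1 = m + 1 by omega, show m + 2 - 2 = m by omega, Nat.factorial_succ,
      Nat.factorial_succ]
    ring
  calc bCoeff N p * ((N - p - 1) * (N - p))
      = N.factorial / (N - p).factorial * (N - p).factorial := by rw [bCoeff, hfac]; ring
    _ = N.factorial := Nat.div_mul_cancel (Nat.factorial_dvd_factorial (by omega))

lemma bCoeff_mul_sub_one {p : ℕ} (hp : p + 1 < N) : bCoeff N p * (N - p - 1) = iCoeff N p := by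
  refine Nat.eq_of_mul_eq_mul_right (show 0 < N - p by omega) ?_
  rw [iCoeff_mul_sub (by omega), Nat.mul_assoc, bCoeff_mul_sub_one_mul_sub hp]

lemma iCoeff_add_bCoeff {p : ℕ} (hp : p + 1 < N) : iCoeff N p + bCoeff N p = iCoeff N (p + 1) := by
  refine Nat.eq_of_mul_eq_mul_right (show 0 < N - (p + 1) by omega) ?_
  rw [iCoeff_mul_sub hp, show N - (p + 1) = N - p - 1 by omega, Nat.add_mul,
    bCoeff_mul_sub_one hp, ← Nat.mul_add_one, show N - p - 1 + 1 = N - p by omega,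
    iCoeff_mul_sub (by omega)]

lemma sum_iCoeff_add_sum_bCoeff (hN : N ≠ 0) :
    ∑ p ∈ range N, iCoeff N p * i p + ∑ p ∈ range (N - 1), bCoeff N p * bres N 0 i p =
      N.factorial * ∑ ℓ ∈ range N, carry N i ℓ := by
  have h := sum_mul_add_sum_mul_bres (N := N) (i := i) (iCoeff N) (bCoeff N) (N - 1)
    fun p hp => iCoeff_add_bCoeff (by omega)
  rw [Nat.sub_add_cancel (Nat.one_le_iff_ne_zero.2 hN), bres_sub_one hN, mul_zero, add_zero] at h
  rw [h, mul_sum]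
  exact sum_congr rfl fun ℓ hℓ => by rw [iCoeff_mul_sub (mem_range.1 hℓ)]

lemma sum_Ico_bCoeff_lt_factorial :
    ∑ p ∈ Ico (N - 3) (N - 1), bCoeff N p * bres N 0 i p < N.factorial := by
  have hterm : ∀ p ∈ Ico (N - 3) (N - 1), bCoeff N p * bres N 0 i p ≤ iCoeff N p := by
    intro p hp
    have hp := (mem_Ico.1 hp).2
    rw [← bCoeff_mul_sub_one (show p + 1 < N by omega)]
    exact Nat.mul_le_mul_left _ (by have := bres_lt (i := i) (show p < N by omega); omega)
  -- `iCoeff N p = N!/(N - p)` and `1/3 + 1/2 < 1`.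
  refine (sum_le_sum hterm).trans_lt ?_
  rcases (show N ≤ 2 ∨ 3 ≤ N by omega) with hN | hN
  · interval_cases N <;> simp [iCoeff, Nat.factorial]
  · obtain ⟨n, rfl⟩ : ∃ n, N = n + 3 := ⟨N - 3, by omega⟩
    have h3 := iCoeff_mul_sub (N := n + 3) (p := n) (by omega)
    have h2 := iCoeff_mul_sub (N := n + 3) (p := n + 1) (by omega)
    rw [show n + 3 - n = 3 by omega] at h3
    rw [show n + 3 - (n + 1) = 2 by omega] at h2
    rw [show n + 3 - 3 = n by omega, show n + 3 - 1 = n + 2 by omega, sum_Ico_succ_top (by omega),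
      Nat.Ico_succ_singleton, sum_singleton]
    have := Nat.factorial_pos (n + 3)
    omega

lemma sum_iCoeff_add_sum_bCoeff_le_factorial_iff (hN : N ≠ 0) :
    ∑ p ∈ range N, iCoeff N p * i p + ∑ p ∈ range (N - 3), bCoeff N p * bres N 0 i p
        ≤ N.factorial ↔ ∑ ℓ ∈ range N, carry N i ℓ ≤ 1 := by
  have hid := sum_iCoeff_add_sum_bCoeff (i := i) hN
  rw [← sum_range_add_sum_Ico _ (show N - 3 ≤ N - 1 by omega)] at hid
  have htail := sum_Ico_bCoeff_lt_factorial (N := N) (i := i)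
  constructor
  · intro h
    have hlt : N.factorial * ∑ ℓ ∈ range N, carry N i ℓ < N.factorial * 2 := by omega
    have := Nat.lt_of_mul_lt_mul_left hlt
    omega
  · intro h
    have := Nat.mul_le_mul_left N.factorial h
    omega

lemma sum_carry_le_one_of_support (hsupp : ∀ l < N, i l ≠ 0 → l + ∑ p ∈ range N, i p ≤ N) :
    ∑ ℓ ∈ range N, carry N i ℓ ≤ 1 := by
  set s := ∑ p ∈ range N, i p
  -- Before a carry occurs `b_{ℓ-1}` is the partial sum of `i`; the first carry has value `1`
  -- and is followed only by zeros of `i`.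
  have inv : ∀ L ≤ N,
      (∑ ℓ ∈ range L, carry N i ℓ = 0 ∧ bresPrev N i L = ∑ p ∈ range L, i p ∧
        L + ∑ p ∈ range L, i p ≤ N) ∨
      (∑ ℓ ∈ range L, carry N i ℓ = 1 ∧ bresPrev N i L = 0 ∧ ∀ p, L ≤ p → p < N → i p = 0) := by
    intro L hL
    induction L with
    | zero => simp [bresPrev]
    | succ L ih =>
      have hc : carry N i L = (i L + bresPrev N i L) / (N - L) := rfl
      have hb : bresPrev N i (L + 1) = (i L + bresPrev N i L) % (N - L) := bres_eq_mod L
      rw [sum_range_succ, sum_range_succ, hb, hc]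
      rcases ih (by omega) with ⟨hC, hprev, hle⟩ | ⟨hC, hprev, hzero⟩
      · rw [hC, hprev]
        by_cases hlt : i L + ∑ p ∈ range L, i p < N - L
        · left
          rw [Nat.div_eq_of_lt hlt, Nat.mod_eq_of_lt hlt]
          omega
        · have hσs : ∑ p ∈ range L, i p + i L ≤ s := by
            rw [← sum_range_succ]
            exact sum_le_sum_of_subset (range_subset_range.2 hL)
          have hfull : i L + ∑ p ∈ range L, i p = N - L := by
            by_cases hi : i L = 0
            · omega
            · have := hsupp L (by omega) hi
              omega
          right
          refine ⟨?_, ?_, fun p hp hpN => ?_⟩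
          · rw [hfull, Nat.div_self (by omega)]
          · rw [hfull, Nat.mod_self]
          · by_contra hi
            have := hsupp p hpN hi
            omega
      · right
        rw [hC, hprev, hzero L le_rfl (by omega), Nat.zero_div, Nat.zero_mod]
        exact ⟨rfl, rfl, fun p hp => hzero p (by omega)⟩
  rcases inv N le_rfl with ⟨h, -⟩ | ⟨h, -⟩ <;> omega

lemma support_of_sum_carry_le_one (hN : N ≠ 0) (hG : ∑ ℓ ∈ range N, carry N i ℓ ≤ 1) :
    ∀ l < N, i l ≠ 0 → l + ∑ p ∈ range N, i p ≤ N := by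
  intro l hl hi
  have htot := sum_eq_sum_mul_carry (i := i) hN
  have hσ : ∑ p ∈ range (l + 1), i p ≤ ∑ p ∈ range N, i p :=
    sum_le_sum_of_subset (range_subset_range.2 hl)
  rw [sum_range_succ] at hσ
  obtain ⟨m, hm, hcm⟩ : ∃ m ∈ range N, carry N i m ≠ 0 := by
    refine exists_ne_zero_of_sum_ne_zero fun h => ?_
    have : ∑ ℓ ∈ range N, (N - ℓ) * carry N i ℓ = 0 :=
      sum_eq_zero fun ℓ hℓ => by rw [(sum_eq_zero_iff.1 h) ℓ hℓ, mul_zero]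
    omega
  have hzero : ∀ ℓ ∈ range N, ℓ ≠ m → carry N i ℓ = 0 := fun ℓ hℓ hne => by
    have := add_le_sum (f := carry N i) (fun _ _ => Nat.zero_le _) hm hℓ hne.symm
    omega
  have hone : carry N i m = 1 := by
    have := single_le_sum (f := carry N i) (fun _ _ => Nat.zero_le _) hm
    omega
  have hs : ∑ p ∈ range N, i p = N - m := by
    rw [htot, sum_eq_single_of_mem m hm fun ℓ hℓ hne => by rw [hzero ℓ hℓ hne, mul_zero], hone,
      mul_one]
  have hml : l ≤ m := by
    by_contra! hml
    have hcarry := single_le_sum (f := fun ℓ => (N - ℓ) * carry N i ℓ) (fun _ _ => Nat.zero_le _)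
      (mem_range.2 hml)
    have hprefix := sum_mul_carry_le_sum (N := N) (i := i) l
    simp only [hone, mul_one] at hcarry
    omega
  omega

lemma sum_carry_le_one_iff_support (hN : N ≠ 0) :
    ∑ ℓ ∈ range N, carry N i ℓ ≤ 1 ↔ ∀ l < N, i l ≠ 0 → l + ∑ p ∈ range N, i p ≤ N :=
  ⟨support_of_sum_carry_le_one hN, sum_carry_le_one_of_support⟩

lemma sum_iCoeff_add_sum_bCoeff_le_factorial_iff_support :
    ∑ p ∈ range N, iCoeff N p * i p + ∑ p ∈ range (N - 3), bCoeff N p * bres N 0 i p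
        ≤ N.factorial ↔ ∀ l < N, i l ≠ 0 → l + ∑ p ∈ range N, i p ≤ N := by
  rcases eq_or_ne N 0 with rfl | hN
  · simp
  · rw [sum_iCoeff_add_sum_bCoeff_le_factorial_iff hN, sum_carry_le_one_iff_support hN]

lemma mem_zero_one_iff (x : Fin N → ℕ) :
    x ∈ Sset N 0 1 ↔ ∀ l : Fin N, x l ≠ 0 → (l : ℕ) + ∑ p, x p ≤ N := by
  have key : ∀ i : ℕ → ℕ, (∀ p : Fin N, i p = x p) →
      (∑ p ∈ range N, iCoeff N p * i p + ∑ p ∈ range (N - 3), bCoeff N p * bres N 0 i p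
          ≤ N.factorial ↔
        ∀ l : Fin N, x l ≠ 0 → (l : ℕ) + ∑ p, x p ≤ N) := by
    intro i hi
    rw [sum_iCoeff_add_sum_bCoeff_le_factorial_iff_support]
    simp only [← Fin.sum_univ_eq_sum_range, hi, Fin.forall_iff]
    exact forall₂_congr fun l hl => by rw [← hi ⟨l, hl⟩]
  simp only [Sset, Set.mem_ofPred_eq, Nat.cast_one, mul_one, Nat.cast_zero, zero_mul, add_zero,
    le_sub_iff_add_le, ← Nat.cast_add, Nat.cast_le]
  refine ⟨fun h => ?_, fun h i hi _ => (key i hi).2 h⟩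
  let i (p : ℕ) : ℕ := if hp : p < N then x ⟨p, hp⟩ else 0
  have hi : ∀ p : Fin N, i p = x p := fun p => dif_pos p.2
  exact (key i hi).1 (h i hi fun p hp => dif_neg (by omega))

lemma card_piAntidiag_nat {ι : Type*} [DecidableEq ι] (s : Finset ι) (n : ℕ) :
    #(piAntidiag s n) = (#s + n - 1).choose n := by
  rw [← card_finsuppAntidiag_nat_eq_choose]
  simp [finsuppAntidiag]

lemma card_support_add_sum_le (N : ℕ) :
    Nat.card {x : Fin N → ℕ | ∀ l : Fin N, x l ≠ 0 → (l : ℕ) + ∑ p, x p ≤ N} = 2 ^ N := by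
  classical
  let T (s : ℕ) : Finset (Fin N) := {l | (l : ℕ) < N + 1 - s}
  have hsum : ∀ (x : Fin N → ℕ) s, (∀ l, x l ≠ 0 → l ∈ T s) → ∑ l ∈ T s, x l = ∑ l, x l :=
    fun x s h => sum_filter_of_ne fun l _ hl => by simpa [T] using h l hl
  have hset : {x : Fin N → ℕ | ∀ l : Fin N, x l ≠ 0 → (l : ℕ) + ∑ p, x p ≤ N} =
      ↑((range (N + 1)).biUnion fun s => piAntidiag (T s) s) := by
    ext x
    simp only [Set.mem_ofPred_eq, coe_biUnion, coe_range, Set.mem_Iio, mem_coe, mem_piAntidiag,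
      Set.mem_iUnion, exists_prop]
    constructor
    · intro h
      have hT : ∀ l, x l ≠ 0 → l ∈ T (∑ p, x p) := fun l hl => by
        have := h l hl
        simp only [T, mem_filter, mem_univ, true_and]
        omega
      refine ⟨∑ p, x p, ?_, hsum x _ hT, hT⟩
      by_contra hs
      have : ∑ p, x p = 0 := sum_eq_zero fun l _ => by
        by_contra hl
        have := h l hl
        omega
      omega
    · rintro ⟨s, hs, hxs, hT⟩ l hl
      have := hT l hl
      simp only [T, mem_filter, mem_univ, true_and] at this
      rw [← hsum x s hT, hxs]
      omega
  have hdisj : (range (N + 1) : Set ℕ).PairwiseDisjoint fun s => piAntidiag (T s) s := by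
    intro s _ t _ hst
    refine disjoint_left.2 fun x hxs hxt => hst ?_
    rw [mem_piAntidiag] at hxs hxt
    rw [← hxs.1, ← hxt.1, hsum x s hxs.2, hsum x t hxt.2]
  have hcard : ∀ s ∈ range (N + 1), #(piAntidiag (T s) s) = N.choose s := by
    intro s hs
    rw [card_piAntidiag_nat, Fin.card_filter_val_lt]
    rcases Nat.eq_zero_or_pos s with rfl | hs0
    · simp
    · rw [min_eq_right (by omega), show N + 1 - s + s - 1 = N by have := mem_range.1 hs; omega]
  rw [hset, Nat.card_coe_set_eq, Set.ncard_coe_finset, card_biUnion hdisj, sum_congr rfl hcard,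
    Nat.sum_range_choose]

end Sset

theorem Sset_one_pow_general (N : ℕ) :
    Nat.card (Sset N 0 1) = 2 ^ N ∧
    (fun p : Fin 4 => if p = 1 then 3 else 0) ∈ Sset 4 0 1 := by
  constructor
  · rw [show Sset N 0 1 = {x | ∀ l : Fin N, x l ≠ 0 → (l : ℕ) + ∑ p, x p ≤ N} from
      Set.ext Sset.mem_zero_one_iff]
    exact Sset.card_support_add_sum_le N
  · rw [Sset.mem_zero_one_iff]
    decide

/-- For `k = 1`, `j = 0`: `|S(1^N)| = 2^N` (the dimension of the local Weyl module
`W_loc(N)` for `sl₂`), and for `N = 4` the tuple `(0,3,0,0)` (the monomial `f_1³`)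
belongs to `S(1⁴)`. -/
theorem Sset_one_pow (N : ℕ) (hN : 1 ≤ N) :
    Nat.card (Sset N 0 1) = 2 ^ N ∧
    (fun p : Fin 4 => if p = 1 then 3 else 0) ∈ Sset 4 0 1 :=
  Sset_one_pow_general N
end
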